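/- arXiv:1804.03025 — 7 statements merged into one kernel-verified Lean document; each statement's English description precedes it below -/
import Mathlib

section
/- For natural numbers a and b, the sum of the signs of all (a,b)-shuffles (permutations σ of {1,...,a+b} with σ(1)<...<σ(a) and σ(a+1)<...<σ(a+b)) equals 0 if a and b are both odd, and equals the binomial coefficient C(⌊(a+b)/2⌋, ⌊a/2⌋) otherwise. -/
open scoped Classical

/-- Sum of the signs of all permutations of `Fin n` that are strictly increasing
on the first `m` positions and on the remaining `n - m` positions
(the `(m, n-m)`-shuffles when the split point is `m`). -/
noncomputable def shuffleSignSum (n m : ℕ) : ℤ :=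
  ∑ σ : Equiv.Perm (Fin n),
    if ((∀ i j : Fin n, i < j → (j : ℕ) < m → σ i < σ j) ∧
        (∀ i j : Fin n, i < j → m ≤ (i : ℕ) → σ i < σ j)) then
      (Equiv.Perm.sign σ : ℤ) else 0

/-!
A shuffle `σ` is determined by `s = σ {0, …, a-1}`, and its inversions are the pairs `y < x`
with `x ∈ s`, `y ∉ s`. As `σ k` (`k < a`) is the `k`-th smallest element of `s`, exactly
`σ k - k` elements outside `s` lie below it, so `sgn σ = (-1) ^ (∑ s + C(a, 2))`.
Summed over all `a`-subsets of `{0, …, a+b-1}`, this is the Gaussian binomial coefficient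
`F(a, b) = [a+b, a]_q` at `q = -1`. Splitting off the largest element gives the `q`-Pascal rule
`F(a+1, b+1) = F(a+1, b) + (-1)^(b+1) F(a, b+1)`, which the parity-dependent binomial
coefficient of the statement also satisfies.
-/

open Finset Equiv

def subsetSignSum (n k : ℕ) : ℤ :=
  ∑ t ∈ powersetCard k (range n), (-1) ^ (∑ i ∈ t, i + k.choose 2)

lemma subsetSignSum_zero_right (n : ℕ) : subsetSignSum n 0 = 1 := by
  simp [subsetSignSum]

lemma subsetSignSum_self (n : ℕ) : subsetSignSum n n = 1 := by
  have h : powersetCard n (range n) = {range n} := by simpa using powersetCard_self (range n)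
  rw [subsetSignSum, h, sum_singleton, sum_range_id, ← Nat.choose_two_right, ← two_mul, pow_mul,
    neg_one_sq, one_pow]

lemma subsetSignSum_succ_succ (n k : ℕ) :
    subsetSignSum (n + 1) (k + 1) =
      subsetSignSum n (k + 1) + (-1) ^ (n + k) * subsetSignSum n k := by
  have hn : n ∉ range n := notMem_range_self
  have hdisj : Disjoint (powersetCard (k + 1) (range n))
      ((powersetCard k (range n)).image (insert n)) := by
    refine disjoint_left.2 fun t ht ht' => ?_
    obtain ⟨u, -, rfl⟩ := mem_image.1 ht'
    exact hn ((mem_powersetCard.1 ht).1 (mem_insert_self n u))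
  have hinj : Set.InjOn (insert n) (powersetCard k (range n) : Set (Finset ℕ)) :=
    fun t ht u hu h => by
    rw [← erase_insert (fun h' => hn ((mem_powersetCard.1 ht).1 h')), h,
      erase_insert (fun h' => hn ((mem_powersetCard.1 hu).1 h'))]
  rw [subsetSignSum, range_add_one, powersetCard_succ_insert hn, sum_union hdisj, sum_image hinj,
    subsetSignSum, subsetSignSum, mul_sum]
  congr 1
  refine sum_congr rfl fun t ht => ?_
  rw [sum_insert fun h => hn ((mem_powersetCard.1 ht).1 h), Nat.choose_succ_succ',
    Nat.choose_one_right]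
  ring

def parityBinomial (a b : ℕ) : ℤ :=
  if Odd a ∧ Odd b then 0 else ((a + b) / 2).choose (a / 2)

lemma parityBinomial_succ_succ (a b : ℕ) :
    parityBinomial (a + 1) (b + 1) =
      parityBinomial (a + 1) b + (-1) ^ (b + 1) * parityBinomial a (b + 1) := by
  rcases Nat.even_or_odd' a with ⟨k, rfl | rfl⟩ <;>
    rcases Nat.even_or_odd' b with ⟨l, rfl | rfl⟩
  · simp [parityBinomial, Nat.odd_mul, show ¬ Odd 2 by decide,
      show (2 * k + 1 + 2 * l) / 2 = k + l by omega,
      show (2 * k + 1) / 2 = k by omega, show (2 * k + (2 * l + 1)) / 2 = k + l by omega]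
  · simp [parityBinomial, parity_simps,
      show (2 * k + 1 + (2 * l + 1 + 1)) / 2 = k + l + 1 by omega,
      show (2 * k + 1) / 2 = k by omega, show (2 * k + (2 * l + 1 + 1)) / 2 = k + l + 1 by omega]
  · simp [parityBinomial, parity_simps,
      show (2 * k + 1 + 1 + (2 * l + 1)) / 2 = k + l + 1 by omega,
      show (2 * k + 1 + 1 + 2 * l) / 2 = k + l + 1 by omega]
  · simp [parityBinomial, parity_simps,
      show (2 * k + 1 + 1 + (2 * l + 1 + 1)) / 2 = k + l + 1 + 1 by omega,
      show (2 * k + 1 + 1 + (2 * l + 1)) / 2 = k + l + 1 by omega,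
      show (2 * k + 1 + (2 * l + 1 + 1)) / 2 = k + l + 1 by omega,
      show (2 * k + 1 + 1) / 2 = k + 1 by omega, show (2 * k + 1) / 2 = k by omega,
      Nat.choose_succ_succ']
    ring

lemma subsetSignSum_add (a b : ℕ) : subsetSignSum (a + b) a = parityBinomial a b := by
  induction a generalizing b with
  | zero => simp [subsetSignSum_zero_right, parityBinomial]
  | succ a iha =>
    induction b with
    | zero => simp [subsetSignSum_self, parityBinomial]
    | succ b ihb =>
      have h := subsetSignSum_succ_succ (a + 1 + b) a
      rw [show a + 1 + b + 1 = a + 1 + (b + 1) by omega] at h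
      rw [h, ihb, show a + 1 + b = a + (b + 1) by omega, iha, parityBinomial_succ_succ,
        show a + (b + 1) + a = b + 1 + 2 * a by ring, pow_add, pow_mul, neg_one_sq, one_pow,
        mul_one]

lemma Finset.card_compl_eq_of_card_eq {a b : ℕ} {s : Finset (Fin (a + b))} (hs : #s = a) :
    #sᶜ = b := by
  rw [card_compl, Fintype.card_fin, hs, Nat.add_sub_cancel_left]

namespace Equiv.Perm

variable {a b : ℕ}

def IsShuffle (σ : Perm (Fin (a + b))) : Prop :=
  StrictMono (σ ∘ Fin.castAdd b) ∧ StrictMono (σ ∘ Fin.natAdd a)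

lemma isShuffle_iff (σ : Perm (Fin (a + b))) :
    σ.IsShuffle ↔ (∀ i j : Fin (a + b), i < j → (j : ℕ) < a → σ i < σ j) ∧
      (∀ i j : Fin (a + b), i < j → a ≤ (i : ℕ) → σ i < σ j) := by
  refine and_congr ⟨fun h i j hij hj => ?_, fun h i j hij => h _ _ hij j.2⟩
    ⟨fun h i j hij hi => ?_,
      fun h i j hij => h _ _ ((Fin.natAdd_lt_natAdd_iff a).2 hij) (by simp)⟩
  · induction j using Fin.addCases with
    | right j => simp at hj
    | left j =>
      induction i using Fin.addCases with
      | left i => exact h hij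
      | right i => rw [Fin.lt_def, Fin.val_natAdd, Fin.val_castAdd] at hij; omega
  · induction i using Fin.addCases with
    | left i => rw [Fin.val_castAdd] at hi; omega
    | right i =>
      induction j using Fin.addCases with
      | left j => rw [Fin.lt_def, Fin.val_natAdd, Fin.val_castAdd] at hij; omega
      | right j => exact h ((Fin.natAdd_lt_natAdd_iff a).1 hij)

lemma card_filter_apply_lt_apply {n : ℕ} (σ : Perm (Fin n)) (i : Fin n) :
    #{j | σ j < σ i} = σ i := by
  have h : ({j | σ j < σ i} : Finset (Fin n)) = (Iio (σ i)).map σ.symm.toEmbedding := by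
    ext j
    simp
  rw [h, card_map, Fin.card_Iio]

lemma sign_eq_prod_neg_one_pow {n : ℕ} (σ : Perm (Fin n)) :
    (sign σ : ℤ) = ∏ i, (-1) ^ #{j ∈ Ioi i | σ j < σ i} := by
  rw [sign_eq_prod_prod_Ioi, Units.coe_prod]
  refine prod_congr rfl fun i _ => ?_
  simp only [Units.coe_prod, apply_ite Units.val, Units.val_one, Units.val_neg]
  rw [prod_ite, prod_const_one, one_mul, prod_const]
  congr 2
  exact filter_congr fun j hj => not_lt.trans (σ.injective.ne (mem_Ioi.1 hj).ne').le_iff_lt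

namespace IsShuffle

variable {σ : Perm (Fin (a + b))}

lemma card_inversions_castAdd (hσ : σ.IsShuffle) (k : Fin a) :
    #{j ∈ Ioi (Fin.castAdd b k) | σ j < σ (Fin.castAdd b k)} + k = σ (Fin.castAdd b k) := by
  set i := Fin.castAdd b k
  have hbefore : ∀ j < i, σ j < σ i := fun j hj => by
    induction j using Fin.addCases with
    | left j => exact hσ.1 hj
    | right j => rw [Fin.lt_def, Fin.val_natAdd, Fin.val_castAdd] at hj; omega
  have hsplit : ({j | σ j < σ i} : Finset _) = {j ∈ Ioi i | σ j < σ i} ∪ Iio i := by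
    ext j
    simp only [mem_filter, mem_univ, true_and, mem_union, mem_Iio, mem_Ioi]
    rcases lt_trichotomy j i with hj | rfl | hj
    · simp [hj, hbefore j hj]
    · simp
    · simp [hj, hj.not_gt]
  have hdisj : _root_.Disjoint {j ∈ Ioi i | σ j < σ i} (Iio i) :=
    disjoint_left.2 fun j hj hj' => (mem_Ioi.1 (mem_filter.1 hj).1).not_gt (mem_Iio.1 hj')
  rw [← card_filter_apply_lt_apply σ i, hsplit, card_union_of_disjoint hdisj, Fin.card_Iio]
  simp [i]

lemma card_inversions_natAdd (hσ : σ.IsShuffle) (l : Fin b) :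
    #{j ∈ Ioi (Fin.natAdd a l) | σ j < σ (Fin.natAdd a l)} = 0 := by
  refine card_eq_zero.2 (filter_eq_empty_iff.2 fun j hj => ?_)
  rw [mem_Ioi] at hj
  induction j using Fin.addCases with
  | left j => rw [Fin.lt_def, Fin.val_natAdd, Fin.val_castAdd] at hj; omega
  | right j => exact (hσ.2 ((Fin.natAdd_lt_natAdd_iff a).1 hj)).asymm

lemma sign_eq (hσ : σ.IsShuffle) :
    (sign σ : ℤ) = (-1) ^ (∑ k : Fin a, (σ (Fin.castAdd b k) : ℕ) + a.choose 2) := by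
  have hk (k : Fin a) : (-1 : ℤ) ^ #{j ∈ Ioi (Fin.castAdd b k) | σ j < σ (Fin.castAdd b k)} =
      (-1) ^ ((σ (Fin.castAdd b k) : ℕ) + k) := by
    rw [← hσ.card_inversions_castAdd k, add_assoc, pow_add, ← two_mul, pow_mul, neg_one_sq,
      one_pow, mul_one]
  rw [sign_eq_prod_neg_one_pow, Fin.prod_univ_add]
  simp only [hσ.card_inversions_natAdd, pow_zero, prod_const_one, mul_one, hk]
  rw [prod_pow_eq_pow_sum, sum_add_distrib, Fin.sum_univ_eq_sum_range (fun k => k), sum_range_id,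
    Nat.choose_two_right]

end IsShuffle

def firstBlock (σ : Perm (Fin (a + b))) : Finset (Fin (a + b)) :=
  univ.map ((Fin.castAddEmb b).trans σ.toEmbedding)

lemma card_firstBlock (σ : Perm (Fin (a + b))) : #σ.firstBlock = a := by
  simp [firstBlock]

lemma sum_firstBlock {M : Type*} [AddCommMonoid M] (σ : Perm (Fin (a + b)))
    (f : Fin (a + b) → M) :
    ∑ x ∈ σ.firstBlock, f x = ∑ k : Fin a, f (σ (Fin.castAdd b k)) := by
  simp [firstBlock]

noncomputable def shuffleOf (s : Finset (Fin (a + b))) (hs : #s = a) : Perm (Fin (a + b)) :=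
  finSumFinEquiv.symm.trans (finSumEquivOfFinset hs (Finset.card_compl_eq_of_card_eq hs))

@[simp]
lemma shuffleOf_castAdd {s : Finset (Fin (a + b))} (hs : #s = a) (k : Fin a) :
    shuffleOf s hs (Fin.castAdd b k) = s.orderEmbOfFin hs k := by
  simp [shuffleOf]

@[simp]
lemma shuffleOf_natAdd {s : Finset (Fin (a + b))} (hs : #s = a) (l : Fin b) :
    shuffleOf s hs (Fin.natAdd a l) =
      sᶜ.orderEmbOfFin (Finset.card_compl_eq_of_card_eq hs) l := by
  simp [shuffleOf]

lemma isShuffle_shuffleOf {s : Finset (Fin (a + b))} (hs : #s = a) : (shuffleOf s hs).IsShuffle :=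
  ⟨fun k l hkl => by simpa using hkl, fun k l hkl => by simpa using hkl⟩

lemma firstBlock_shuffleOf {s : Finset (Fin (a + b))} (hs : #s = a) :
    (shuffleOf s hs).firstBlock = s := by
  have h : (Fin.castAddEmb b).trans (shuffleOf s hs).toEmbedding =
      (s.orderEmbOfFin hs).toEmbedding := by
    ext k
    simp
  rw [firstBlock, h, map_orderEmbOfFin_univ]

lemma IsShuffle.eq_shuffleOf {σ : Perm (Fin (a + b))} (hσ : σ.IsShuffle) :
    σ = shuffleOf σ.firstBlock σ.card_firstBlock := by
  have hmem (k : Fin a) : σ (Fin.castAdd b k) ∈ σ.firstBlock := by simp [firstBlock]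
  have hnotMem (l : Fin b) : σ (Fin.natAdd a l) ∈ σ.firstBlockᶜ := by
    simp only [firstBlock, mem_compl, mem_map, mem_univ, true_and, not_exists]
    intro k h
    have := congrArg Fin.val (σ.injective h)
    simp only [Fin.coe_castAddEmb, Fin.val_castAdd, Fin.val_natAdd] at this
    omega
  have hleft := orderEmbOfFin_unique σ.card_firstBlock hmem hσ.1
  have hright :=
    orderEmbOfFin_unique (Finset.card_compl_eq_of_card_eq σ.card_firstBlock) hnotMem hσ.2
  ext i
  induction i using Fin.addCases with
  | left k => simp [← congrFun hleft k]
  | right l => simp [← congrFun hright l]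

end Equiv.Perm

open Equiv.Perm

lemma shuffleSignSum_eq_sum_powersetCard (a b : ℕ) :
    shuffleSignSum (a + b) a =
      ∑ s ∈ powersetCard a (univ : Finset (Fin (a + b))),
        (-1) ^ (∑ x ∈ s, (x : ℕ) + a.choose 2) := by
  simp_rw [shuffleSignSum, ← isShuffle_iff, ← sum_filter]
  refine sum_bij' (fun σ _ => σ.firstBlock) (fun s hs => shuffleOf s (mem_powersetCard.1 hs).2)
    (fun σ _ => mem_powersetCard.2 ⟨subset_univ _, σ.card_firstBlock⟩)
    (fun s _ => mem_filter.2 ⟨mem_univ _, isShuffle_shuffleOf _⟩)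
    (fun σ hσ => ((mem_filter.1 hσ).2.eq_shuffleOf).symm)
    (fun s _ => firstBlock_shuffleOf _)
    (fun σ hσ => ?_)
  rw [(mem_filter.1 hσ).2.sign_eq, sum_firstBlock]

lemma Finset.sum_powersetCard_univ_fin {M : Type*} [AddCommMonoid M] (n k : ℕ)
    (f : Finset ℕ → M) :
    ∑ s ∈ powersetCard k (univ : Finset (Fin n)), f (s.map Fin.valEmbedding) =
      ∑ t ∈ powersetCard k (range n), f t := by
  rw [← Nat.Iio_eq_range, ← Fin.map_valEmbedding_univ, powersetCard_map, sum_map]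
  rfl

lemma shuffleSignSum_eq_subsetSignSum (a b : ℕ) :
    shuffleSignSum (a + b) a = subsetSignSum (a + b) a := by
  rw [shuffleSignSum_eq_sum_powersetCard, subsetSignSum, ← Finset.sum_powersetCard_univ_fin]
  simp_rw [sum_map]
  rfl

theorem sum_signs_shuffles (a b : ℕ) :
    shuffleSignSum (a + b) a =
      if Odd a ∧ Odd b then 0 else (((a + b) / 2).choose (a / 2) : ℤ) :=
  (shuffleSignSum_eq_subsetSignSum a b).trans (subsetSignSum_add a b)
end

section
/- Let C(k,j) denote the sum of signs over all (k−j, j−1)-unshuffles in the symmetric group S_{k−1}. Then for integers p ≥ q ≥ 1, one has C(2p, 2q) = binomial(p−1, q−1). -/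
open scoped Classical

/-!
An unshuffle `σ` of `Fin (m + k)` is determined by the set `S` of values it takes on the first
`m` positions, and every `m`-subset occurs. The inversions of `σ⁻¹` are exactly the pairs
`t < s` with `s ∈ S` and `t ∉ S`, so `sign σ = (-1) ^ (∑ S - m(m-1)/2)`. Hence the signed count
is `± G(m + k, m)`, where `G(n, m) = ∑_{S ⊆ range n, #S = m} (-1) ^ ∑ S` is a Gaussian binomial
coefficient at `q = -1`. Two steps of the `q`-Pascal recurrence give
`G(n + 2, m + 2) = G(n, m + 2) - G(n, m)`, whence `G(2a + 1, 2b) = (-1) ^ b * a.choose b`.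
-/

/-- Sum of the signs of all permutations of `Fin n` that are strictly increasing
on the first `m` positions and on the remaining `n - m` positions.
For `n = k - 1` and `m = k - j` these are the `(k-j, j-1)`-unshuffles. -/
noncomputable def unshuffleSignSum (n m : ℕ) : ℤ :=
  ∑ σ : Equiv.Perm (Fin n),
    if ((∀ i j : Fin n, i < j → (j : ℕ) < m → σ i < σ j) ∧
        (∀ i j : Fin n, i < j → m ≤ (i : ℕ) → σ i < σ j)) then
      (Equiv.Perm.sign σ : ℤ) else 0

open Finset Equiv

section SubsetSum

variable {R : Type*}

/-- `q ^ (m * (m - 1) / 2)` times the Gaussian binomial coefficient `[n choose m]_q`. -/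
def qSubsetSum [CommSemiring R] (q : R) (n m : ℕ) : R :=
  ∑ S ∈ powersetCard m (range n), q ^ ∑ i ∈ S, i

theorem qSubsetSum_zero_right [CommSemiring R] (q : R) (n : ℕ) : qSubsetSum q n 0 = 1 := by
  simp [qSubsetSum]

theorem qSubsetSum_of_lt [CommSemiring R] (q : R) {n m : ℕ} (h : n < m) :
    qSubsetSum q n m = 0 := by
  rw [qSubsetSum, powersetCard_eq_empty.2 (by simpa using h), sum_empty]

theorem qSubsetSum_succ_succ [CommSemiring R] (q : R) (n m : ℕ) :
    qSubsetSum q (n + 1) (m + 1) = qSubsetSum q n (m + 1) + q ^ n * qSubsetSum q n m := by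
  have hn : n ∉ range n := by simp
  rw [qSubsetSum, range_add_one, powersetCard_succ_insert hn, sum_union, sum_image]
  · rw [qSubsetSum, qSubsetSum, mul_sum]
    congr 1
    refine sum_congr rfl fun S hS => ?_
    rw [sum_insert fun h => hn ((mem_powersetCard.1 hS).1 h), pow_add]
  · intro S hS T hT h
    simpa [erase_insert fun h' => hn ((mem_powersetCard.1 hS).1 h'),
      erase_insert fun h' => hn ((mem_powersetCard.1 hT).1 h')] using congrArg (erase · n) h
  · refine disjoint_left.2 fun S hS hS' => ?_
    obtain ⟨T, -, rfl⟩ := mem_image.1 hS'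
    exact hn ((mem_powersetCard.1 hS).1 (mem_insert_self n T))

theorem qSubsetSum_neg_one_add_two_add_two [CommRing R] (n m : ℕ) :
    qSubsetSum (-1 : R) (n + 2) (m + 2) = qSubsetSum (-1) n (m + 2) - qSubsetSum (-1) n m := by
  have hsq : ((-1 : R) ^ n) ^ 2 = 1 := by rw [← pow_mul, pow_mul', neg_one_sq, one_pow]
  simp only [qSubsetSum_succ_succ, pow_succ]
  linear_combination (-qSubsetSum (-1 : R) n m) * hsq

theorem qSubsetSum_neg_one_odd_even [CommRing R] (a b : ℕ) :
    qSubsetSum (-1 : R) (2 * a + 1) (2 * b) = (-1) ^ b * a.choose b := by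
  induction a generalizing b with
  | zero =>
    cases b with
    | zero => simp [qSubsetSum_zero_right]
    | succ b => simp [qSubsetSum_of_lt _ (show 2 * 0 + 1 < 2 * (b + 1) by omega)]
  | succ a ih =>
    cases b with
    | zero => simp [qSubsetSum_zero_right]
    | succ b =>
      rw [show 2 * (a + 1) + 1 = 2 * a + 1 + 2 by ring, show 2 * (b + 1) = 2 * b + 2 by ring,
        qSubsetSum_neg_one_add_two_add_two, ← mul_add_one, ih, ih, Nat.choose_succ_succ']
      push_cast
      ring

theorem qSubsetSum_eq_sum_powersetCard_univ [CommSemiring R] (q : R) (n m : ℕ) :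
    qSubsetSum q n m = ∑ S ∈ powersetCard m (univ : Finset (Fin n)), q ^ ∑ s ∈ S, (s : ℕ) := by
  have hrange : range n = (univ : Finset (Fin n)).map Fin.valEmbedding := by ext; simp
  rw [qSubsetSum, hrange, powersetCard_map, sum_map]
  refine sum_congr rfl fun S _ => ?_
  simp

end SubsetSum

theorem neg_one_pow_sum_range_two_mul {R : Type*} [Monoid R] [HasDistribNeg R] (b : ℕ) :
    (-1 : R) ^ (∑ i ∈ range (2 * b), i) = (-1) ^ b := by
  induction b with
  | zero => simp
  | succ b ih =>
    rw [show 2 * (b + 1) = 2 * b + 1 + 1 by ring, sum_range_succ, sum_range_succ, pow_add, pow_add,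
      ih, Even.neg_one_pow (even_two_mul b), Odd.neg_one_pow (odd_two_mul_add_one b), pow_succ]
    simp

theorem sum_card_filter_lt {α : Type*} [LinearOrder α] (S : Finset α) :
    ∑ s ∈ S, #{t ∈ S | t < s} = ∑ i ∈ range #S, i := by
  induction S using Finset.induction_on_max with
  | empty => simp
  | insert x S hlt ih =>
    have hx : x ∉ S := fun h => lt_irrefl x (hlt x h)
    rw [sum_insert hx, card_insert_of_notMem hx, sum_range_succ, add_comm, ← ih]
    congr 1
    · refine sum_congr rfl fun s hs => ?_
      rw [filter_insert, if_neg (not_lt.2 (hlt s hs).le)]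
    · rw [filter_insert, if_neg (lt_irrefl x), filter_true_of_mem hlt]

theorem sum_card_filter_lt_notMem_add {n : ℕ} (S : Finset (Fin n)) :
    ∑ s ∈ S, #{t ∈ Iio s | t ∉ S} + ∑ i ∈ range #S, i = ∑ s ∈ S, (s : ℕ) := by
  rw [← sum_card_filter_lt, ← sum_add_distrib]
  refine sum_congr rfl fun s _ => ?_
  have hsplit := card_filter_add_card_filter_not (s := Iio s) (fun t => t ∉ S)
  rw [Fin.card_Iio] at hsplit
  rw [← hsplit]
  simp only [not_not]
  congr 2
  ext t
  simp [and_comm]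

theorem prod_prod_Iio_ite_mem_notMem {n : ℕ} (S : Finset (Fin n)) :
    ∏ s, ∏ t ∈ Iio s, (if s ∈ S ∧ t ∉ S then (-1 : ℤ) else 1)
      = (-1) ^ (∑ s ∈ S, (s : ℕ) + ∑ i ∈ range #S, i) := by
  have hinner : ∀ s, ∏ t ∈ Iio s, (if s ∈ S ∧ t ∉ S then (-1 : ℤ) else 1)
      = if s ∈ S then (-1) ^ #{t ∈ Iio s | t ∉ S} else 1 := by
    intro s
    split_ifs with hs <;> simp [hs, prod_ite]
  rw [prod_congr rfl fun s _ => hinner s, prod_ite_mem, univ_inter, prod_pow_eq_pow_sum,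
    ← sum_card_filter_lt_notMem_add, add_assoc, pow_add _ _ (_ + _), ← two_mul, pow_mul]
  simp

section Unshuffle

variable {n m k : ℕ}

def IsUnshuffle (m : ℕ) (σ : Perm (Fin n)) : Prop :=
  (∀ i j : Fin n, i < j → (j : ℕ) < m → σ i < σ j) ∧
    (∀ i j : Fin n, i < j → m ≤ (i : ℕ) → σ i < σ j)

theorem unshuffleSignSum_eq_sum_filter (n m : ℕ) :
    unshuffleSignSum n m = ∑ σ ∈ univ.filter (IsUnshuffle (n := n) m), (Perm.sign σ : ℤ) := by
  rw [unshuffleSignSum, sum_filter]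
  exact sum_congr rfl fun _ _ => if_congr Iff.rfl rfl rfl

def firstBlock (m : ℕ) (σ : Perm (Fin n)) : Finset (Fin n) :=
  univ.filter fun t => ((σ⁻¹ t : Fin n) : ℕ) < m

theorem mem_firstBlock {σ : Perm (Fin n)} {t : Fin n} :
    t ∈ firstBlock m σ ↔ ((σ⁻¹ t : Fin n) : ℕ) < m := by
  simp [firstBlock]

theorem IsUnshuffle.inv_lt_inv_iff {σ : Perm (Fin n)} (h : IsUnshuffle m σ) {s t : Fin n}
    (hts : t < s) : σ⁻¹ s < σ⁻¹ t ↔ s ∈ firstBlock m σ ∧ t ∉ firstBlock m σ := by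
  rw [mem_firstBlock, mem_firstBlock, not_lt]
  obtain ⟨i, rfl⟩ := σ.surjective s
  obtain ⟨j, rfl⟩ := σ.surjective t
  simp only [Perm.inv_def, symm_apply_apply]
  constructor
  · intro hij
    refine ⟨not_le.1 fun hi => ?_, not_lt.1 fun hj => ?_⟩
    · exact lt_asymm hts (h.2 i j hij hi)
    · exact lt_asymm hts (h.1 i j hij hj)
  · rintro ⟨hi, hj⟩
    exact Fin.lt_def.2 (hi.trans_le hj)

theorem IsUnshuffle.sign_eq {σ : Perm (Fin n)} (h : IsUnshuffle m σ) :
    (Perm.sign σ : ℤ) =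
      (-1) ^ (∑ s ∈ firstBlock m σ, (s : ℕ) + ∑ i ∈ range #(firstBlock m σ), i) := by
  rw [← prod_prod_Iio_ite_mem_notMem, ← Perm.sign_inv, Perm.sign_eq_prod_prod_Iio]
  push_cast
  refine prod_congr rfl fun s _ => prod_congr rfl fun t ht => ?_
  have hts := mem_Iio.1 ht
  have hne : σ⁻¹ t ≠ σ⁻¹ s := (σ⁻¹).injective.ne hts.ne
  simp only [← h.inv_lt_inv_iff hts]
  rcases hne.lt_or_gt with hlt | hlt <;>
    simp only [hlt, hlt.not_gt, if_true, if_false, Units.val_one, Units.val_neg]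

theorem isUnshuffle_iff_strictMono {σ : Perm (Fin (m + k))} :
    IsUnshuffle m σ ↔ StrictMono (σ ∘ Fin.castAdd k) ∧ StrictMono (σ ∘ Fin.natAdd m) := by
  constructor
  · rintro ⟨h₁, h₂⟩
    exact ⟨fun a b hab => h₁ _ _ hab b.2, fun a b hab => h₂ _ _ (by simpa using hab) (by simp)⟩
  · rintro ⟨h₁, h₂⟩
    refine ⟨fun i j hij hj => ?_, fun i j hij hi => ?_⟩
    · exact h₁ (a := ⟨i, (Fin.lt_def.1 hij).trans hj⟩) (b := ⟨j, hj⟩) hij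
    · have hj : m ≤ (j : ℕ) := hi.trans (Fin.lt_def.1 hij).le
      have := h₂ (a := ⟨i - m, by omega⟩) (b := ⟨j - m, by omega⟩) (by simp [Fin.lt_def]; omega)
      simpa [Fin.natAdd, Nat.add_sub_cancel' hi, Nat.add_sub_cancel' hj] using this

theorem firstBlock_eq_image (σ : Perm (Fin (m + k))) :
    firstBlock m σ = univ.image (σ ∘ Fin.castAdd k) := by
  ext t
  obtain ⟨i, rfl⟩ := σ.surjective t
  simp only [mem_firstBlock, Perm.inv_def, symm_apply_apply, mem_image, mem_univ, true_and,
    Function.comp_apply, σ.injective.eq_iff]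
  exact ⟨fun hi => ⟨⟨i, hi⟩, rfl⟩, by rintro ⟨a, rfl⟩; exact a.2⟩

theorem card_firstBlock (σ : Perm (Fin (m + k))) : #(firstBlock m σ) = m := by
  rw [firstBlock_eq_image,
    card_image_of_injective _ (σ.injective.comp (Fin.castAdd_injective m k)), card_univ,
    Fintype.card_fin]

theorem card_compl_firstBlock (σ : Perm (Fin (m + k))) : #(firstBlock m σ)ᶜ = k := by
  rw [card_compl, card_firstBlock, Fintype.card_fin, Nat.add_sub_cancel_left]

theorem IsUnshuffle.eq_of_firstBlock_eq {σ τ : Perm (Fin (m + k))} (hσ : IsUnshuffle m σ)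
    (hτ : IsUnshuffle m τ) (hστ : firstBlock m σ = firstBlock m τ) : σ = τ := by
  rw [isUnshuffle_iff_strictMono] at hσ hτ
  have hmem : ∀ (ρ : Perm (Fin (m + k))) a, ρ (Fin.castAdd k a) ∈ firstBlock m ρ := fun ρ a => by
    simp [mem_firstBlock]
  have hnotMem : ∀ (ρ : Perm (Fin (m + k))) b, ρ (Fin.natAdd m b) ∈ (firstBlock m ρ)ᶜ :=
    fun ρ b => by simp [mem_firstBlock]
  ext1 i
  refine Fin.addCases (fun a => ?_) (fun b => ?_) i
  · have hσS := orderEmbOfFin_unique (card_firstBlock σ) (hmem σ) hσ.1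
    have hτS := orderEmbOfFin_unique (card_firstBlock σ) (hστ ▸ hmem τ) hτ.1
    exact congrFun (hσS.trans hτS.symm) a
  · have hσS := orderEmbOfFin_unique (card_compl_firstBlock σ) (hnotMem σ) hσ.2
    have hτS := orderEmbOfFin_unique (card_compl_firstBlock σ) (hστ ▸ hnotMem τ) hτ.2
    exact congrFun (hσS.trans hτS.symm) b

theorem exists_isUnshuffle_firstBlock_eq {S : Finset (Fin (m + k))} (hS : #S = m) :
    ∃ σ : Perm (Fin (m + k)), IsUnshuffle m σ ∧ firstBlock m σ = S := by
  have hSc : #Sᶜ = k := by rw [card_compl, hS, Fintype.card_fin, Nat.add_sub_cancel_left]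
  let σ : Perm (Fin (m + k)) := finSumFinEquiv.symm.trans (finSumEquivOfFinset hS hSc)
  have hσ₁ : σ ∘ Fin.castAdd k = S.orderEmbOfFin hS := by ext1 a; simp [σ]
  have hσ₂ : σ ∘ Fin.natAdd m = Sᶜ.orderEmbOfFin hSc := by ext1 b; simp [σ]
  refine ⟨σ, isUnshuffle_iff_strictMono.2 ⟨?_, ?_⟩, ?_⟩
  · rw [hσ₁]; exact (S.orderEmbOfFin hS).strictMono
  · rw [hσ₂]; exact (Sᶜ.orderEmbOfFin hSc).strictMono
  · rw [firstBlock_eq_image, hσ₁, image_orderEmbOfFin_univ]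

theorem sum_filter_isUnshuffle {M : Type*} [AddCommMonoid M] (f : Finset (Fin (m + k)) → M) :
    ∑ σ ∈ univ.filter (IsUnshuffle (n := m + k) m), f (firstBlock m σ)
      = ∑ S ∈ powersetCard m univ, f S := by
  refine sum_nbij (firstBlock m) (fun σ _ => ?_) (fun σ hσ τ hτ hστ => ?_) (fun S hS => ?_)
    fun _ _ => rfl
  · exact mem_powersetCard.2 ⟨subset_univ _, card_firstBlock σ⟩
  · exact (mem_filter.1 hσ).2.eq_of_firstBlock_eq (mem_filter.1 hτ).2 hστ
  · obtain ⟨σ, hσ, rfl⟩ := exists_isUnshuffle_firstBlock_eq (mem_powersetCard.1 hS).2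
    exact ⟨σ, mem_filter.2 ⟨mem_univ σ, hσ⟩, rfl⟩

end Unshuffle

theorem unshuffleSignSum_add (m k : ℕ) :
    unshuffleSignSum (m + k) m = (-1) ^ (∑ i ∈ range m, i) * qSubsetSum (-1) (m + k) m := by
  rw [unshuffleSignSum_eq_sum_filter, sum_congr rfl fun σ hσ => (mem_filter.1 hσ).2.sign_eq,
    sum_filter_isUnshuffle (fun S => (-1 : ℤ) ^ (∑ s ∈ S, (s : ℕ) + ∑ i ∈ range #S, i)),
    qSubsetSum_eq_sum_powersetCard_univ, mul_sum]
  refine sum_congr rfl fun S hS => ?_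
  rw [(mem_powersetCard.1 hS).2, pow_add, mul_comm]

theorem unshuffleSignSum_odd_even {a b : ℕ} (h : b ≤ a) :
    unshuffleSignSum (2 * a + 1) (2 * b) = a.choose b := by
  rw [show 2 * a + 1 = 2 * b + (2 * (a - b) + 1) by omega, unshuffleSignSum_add,
    ← show 2 * a + 1 = 2 * b + (2 * (a - b) + 1) by omega, qSubsetSum_neg_one_odd_even,
    neg_one_pow_sum_range_two_mul, ← mul_assoc, ← pow_add, Even.neg_one_pow ⟨b, rfl⟩, one_mul]

/-- `C(k, j)` for `k = 2p`, `j = 2q`: the signed count of `(k-j, j-1)`-unshuffles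
equals `C(p-1, q-1)`. -/
theorem unshuffle_count_even_even (p q : ℕ) (h1 : 1 ≤ q) (h2 : q ≤ p) :
    unshuffleSignSum (2 * p - 1) (2 * p - 2 * q) = ((p - 1).choose (q - 1) : ℤ) := by
  rw [show 2 * p - 1 = 2 * (p - 1) + 1 by omega, show 2 * p - 2 * q = 2 * (p - q) by omega,
    unshuffleSignSum_odd_even (by omega), show p - q = p - 1 - (q - 1) by omega,
    Nat.choose_symm (by omega)]
end

section
/- Let C(k,j) denote the sum of signs over all (k−j, j−1)-unshuffles in S_{k−1}. Then for integers p ≥ q ≥ 1, one has C(2p+1, 2q) = 0; that is, when k is odd and j is even, the number of even unshuffles equals the number of odd unshuffles. -/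
open scoped Classical

/-!
Pair the values `2t, 2t + 1` of `Fin (2N)`. When `m` is odd, the `m` values taken on the first
block of a permutation cannot be a union of pairs, so some pair is split between the two blocks.
Swapping the values of the smallest split pair turns an unshuffle into another unshuffle: the two
values are adjacent and lie in different blocks, so no order within a block changes. The swap
reverses the sign and does not change which pairs are split, so it is a sign-reversing involution
on the unshuffles and their signed count vanishes.
-/

open Equiv Finset Function

theorem Equiv.swap_apply_lt_swap_apply_of_covBy {α : Type*} [LinearOrder α] {a b x y : α}
    (hab : a ⋖ b) (hxy : x < y) (h : ¬(x = a ∧ y = b)) : swap a b x < swap a b y := by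
  rcases eq_or_ne x a with rfl | hxa
  · have hyb : y ≠ b := fun hyb => h ⟨rfl, hyb⟩
    rw [swap_apply_left, swap_apply_of_ne_of_ne hxy.ne' hyb]
    exact (hab.ge_of_gt hxy).lt_of_ne hyb.symm
  rcases eq_or_ne x b with rfl | hxb
  · rw [swap_apply_right, swap_apply_of_ne_of_ne (hab.lt.trans hxy).ne' hxy.ne']
    exact hab.lt.trans hxy
  rw [swap_apply_of_ne_of_ne hxa hxb]
  rcases eq_or_ne y a with rfl | hya
  · rw [swap_apply_left]; exact hxy.trans hab.lt
  rcases eq_or_ne y b with rfl | hyb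
  · rw [swap_apply_right]; exact (hab.le_of_lt hxy).lt_of_ne hxa
  rwa [swap_apply_of_ne_of_ne hya hyb]

theorem Finset.even_card_of_involutive {α : Type*} {s : Finset α} {π : α → α}
    (hπ : Involutive π) (hfix : ∀ a ∈ s, π a ≠ a) (hs : ∀ a ∈ s, π a ∈ s) : Even #s := by
  rw [← ZMod.natCast_eq_zero_iff_even, card_eq_sum_ones, Nat.cast_sum, Nat.cast_one]
  exact sum_involution (fun a _ => π a) (fun _ _ => by decide) (fun a ha _ => hfix a ha) hs
    (fun a _ => hπ a)

theorem Fin.card_filter_perm_inv_val_lt {n m : ℕ} (σ : Perm (Fin n)) (hmn : m ≤ n) :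
    #{v | ((σ⁻¹ v : Fin n) : ℕ) < m} = m := by
  rw [← card_range m]
  refine card_bij (fun v _ => (σ⁻¹ v : ℕ)) (fun v hv => by simpa using hv)
    (fun v _ w _ h => σ⁻¹.injective (Fin.ext h)) fun k hk => ?_
  have hkn : k < n := (mem_range.1 hk).trans_le hmn
  exact ⟨σ ⟨k, hkn⟩, by simpa using hk, by simp⟩

namespace Unshuffle

variable {n m : ℕ}

def IsUnshuffle (m : ℕ) (σ : Perm (Fin n)) : Prop :=
  (∀ i j : Fin n, i < j → (j : ℕ) < m → σ i < σ j) ∧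
    (∀ i j : Fin n, i < j → m ≤ (i : ℕ) → σ i < σ j)

theorem unshuffleSignSum_eq_sum_filter :
    unshuffleSignSum n m = ∑ σ : Perm (Fin n) with IsUnshuffle m σ, (Perm.sign σ : ℤ) := by
  rw [unshuffleSignSum, sum_filter]
  exact sum_congr rfl fun σ _ => if_congr Iff.rfl rfl rfl

theorem IsUnshuffle.swap_mul {σ : Perm (Fin n)} {a b : Fin n} (hσ : IsUnshuffle m σ)
    (hab : a ⋖ b) (hsplit : ¬(((σ⁻¹ a : Fin n) : ℕ) < m ↔ ((σ⁻¹ b : Fin n) : ℕ) < m)) :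
    IsUnshuffle m (swap a b * σ) := by
  have hpair : ∀ i j, σ i = a → σ j = b → ¬((j : ℕ) < m ↔ (i : ℕ) < m) := by
    rintro i j rfl rfl
    simpa [iff_comm] using hsplit
  refine ⟨fun i j hij hjm => ?_, fun i j hij him => ?_⟩
  · refine swap_apply_lt_swap_apply_of_covBy hab (hσ.1 i j hij hjm) fun ⟨hi, hj⟩ => ?_
    exact hpair i j hi hj ⟨fun _ => (Fin.lt_def.1 hij).trans hjm, fun _ => hjm⟩
  · refine swap_apply_lt_swap_apply_of_covBy hab (hσ.2 i j hij him) fun ⟨hi, hj⟩ => ?_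
    exact hpair i j hi hj ⟨fun h => absurd h (by have := Fin.lt_def.1 hij; omega),
      fun h => absurd h (by omega)⟩

def Splits (m : ℕ) (π : Fin n → Fin n) (σ : Perm (Fin n)) (v : Fin n) : Prop :=
  ¬(((σ⁻¹ v : Fin n) : ℕ) < m ↔ ((σ⁻¹ (π v) : Fin n) : ℕ) < m)

variable {π : Fin n → Fin n}

theorem IsUnshuffle.swap_mul_of_splits (hadj : ∀ v, v ⋖ π v ∨ π v ⋖ v)
    {σ : Perm (Fin n)} {v : Fin n} (hσ : IsUnshuffle m σ) (hv : Splits m π σ v) :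
    IsUnshuffle m (swap v (π v) * σ) := by
  rcases hadj v with h | h
  · exact hσ.swap_mul h hv
  · rw [swap_comm]
    refine hσ.swap_mul h ?_
    simpa [Splits, iff_comm] using hv

theorem splits_swap_mul_iff (hπ : Involutive π) (σ : Perm (Fin n)) (v w : Fin n) :
    Splits m π (swap v (π v) * σ) w ↔ Splits m π σ w := by
  have hinv : (swap v (π v) * σ)⁻¹ = σ⁻¹ * swap v (π v) := by rw [mul_inv_rev, swap_inv]
  rcases eq_or_ne w v with rfl | hwv
  · simp only [Splits, hinv, Perm.mul_apply, swap_apply_left, swap_apply_right]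
    tauto
  rcases eq_or_ne w (π v) with rfl | hwπv
  · simp only [Splits, hinv, Perm.mul_apply, swap_apply_left, swap_apply_right, hπ v]
    tauto
  have hπw : π w ≠ v := fun h => hwπv (by rw [← h, hπ w])
  have hπwπv : π w ≠ π v := fun h => hwv (hπ.injective h)
  simp only [Splits, hinv, Perm.mul_apply, swap_apply_of_ne_of_ne hwv hwπv,
    swap_apply_of_ne_of_ne hπw hπwπv]

theorem exists_splits (hπ : Involutive π) (hfix : ∀ v, π v ≠ v) (hm : Odd m) (hmn : m ≤ n)
    (σ : Perm (Fin n)) : ∃ v, Splits m π σ v := by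
  by_contra! hnone
  refine Nat.not_even_iff_odd.2 hm ?_
  rw [← Fin.card_filter_perm_inv_val_lt σ hmn]
  refine even_card_of_involutive hπ (fun v _ => hfix v) fun v hv => ?_
  simp only [mem_filter, mem_univ, true_and] at hv ⊢
  exact not_not.1 (hnone v) |>.1 hv

section SplitSwap

variable (hex : ∀ σ : Perm (Fin n), ∃ v, Splits m π σ v)

noncomputable def firstSplit (σ : Perm (Fin n)) : Fin n :=
  ({v | Splits m π σ v} : Finset (Fin n)).min' (let ⟨v, hv⟩ := hex σ; ⟨v, by simpa using hv⟩)

noncomputable def splitSwap (σ : Perm (Fin n)) : Perm (Fin n) :=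
  swap (firstSplit hex σ) (π (firstSplit hex σ)) * σ

theorem splits_firstSplit (σ : Perm (Fin n)) : Splits m π σ (firstSplit hex σ) := by
  simpa [firstSplit] using min'_mem ({v | Splits m π σ v} : Finset (Fin n)) _

variable {hex}

theorem firstSplit_splitSwap (hπ : Involutive π) (σ : Perm (Fin n)) :
    firstSplit hex (splitSwap hex σ) = firstSplit hex σ := by
  unfold firstSplit
  congr 1
  ext w
  simp only [mem_filter, mem_univ, true_and]
  exact splits_swap_mul_iff hπ σ _ w

theorem splitSwap_splitSwap (hπ : Involutive π) (σ : Perm (Fin n)) :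
    splitSwap hex (splitSwap hex σ) = σ := by
  rw [splitSwap, firstSplit_splitSwap hπ, splitSwap, ← mul_assoc, swap_mul_self, one_mul]

theorem sign_splitSwap (hfix : ∀ v, π v ≠ v) (σ : Perm (Fin n)) :
    Perm.sign (splitSwap hex σ) = -Perm.sign σ := by
  rw [splitSwap, Perm.sign_mul, Perm.sign_swap (hfix _).symm, neg_one_mul]

end SplitSwap

theorem unshuffleSignSum_eq_zero_of_odd (hπ : Involutive π) (hadj : ∀ v, v ⋖ π v ∨ π v ⋖ v)
    (hm : Odd m) (hmn : m ≤ n) : unshuffleSignSum n m = 0 := by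
  have hfix : ∀ v, π v ≠ v := fun v => (hadj v).elim (·.ne') (·.ne)
  have hex := exists_splits hπ hfix hm hmn
  rw [unshuffleSignSum_eq_sum_filter]
  refine sum_involution (fun σ _ => splitSwap hex σ) (fun σ _ => ?_) (fun σ _ _ h => ?_)
    (fun σ hσ => ?_) (fun σ _ => splitSwap_splitSwap hπ σ)
  · rw [sign_splitSwap hfix, Units.val_neg, add_neg_cancel]
  · exact units_ne_neg_self _ (h ▸ sign_splitSwap hfix σ)
  · simp only [mem_filter, mem_univ, true_and] at hσ ⊢
    exact hσ.swap_mul_of_splits hadj (splits_firstSplit hex σ)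

end Unshuffle

def Fin.pairPartner {N : ℕ} (v : Fin (2 * N)) : Fin (2 * N) :=
  ⟨if (v : ℕ) % 2 = 0 then v + 1 else v - 1, by split_ifs <;> omega⟩

theorem Fin.pairPartner_involutive {N : ℕ} : Involutive (pairPartner (N := N)) := fun v => by
  ext
  simp only [pairPartner]
  split_ifs <;> omega

theorem Fin.covBy_pairPartner_or {N : ℕ} (v : Fin (2 * N)) :
    v ⋖ pairPartner v ∨ pairPartner v ⋖ v := by
  simp only [Fin.covBy_iff, Nat.covBy_iff_add_one_eq, pairPartner]
  split_ifs <;> omega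

/-- `C(k, j)` for `k = 2p + 1`, `j = 2q`: the signed count of unshuffles vanishes. -/
theorem unshuffle_count_odd_even (p q : ℕ) (h1 : 1 ≤ q) (h2 : q ≤ p) :
    unshuffleSignSum (2 * p) (2 * p + 1 - 2 * q) = 0 :=
  Unshuffle.unshuffleSignSum_eq_zero_of_odd Fin.pairPartner_involutive Fin.covBy_pairPartner_or
    ⟨p - q, by omega⟩ (by omega)
end

section
/- Let L be a Lie superalgebra, let ξ, θ ∈ L be odd elements, and define recursively Φ⁰ = θ, Φ^{k+1} = [Φ^k, ξ]. Then for all natural numbers k, l: [[[Φ^k, Φ^l], ξ], ξ] = [Φ^{k+2}, Φ^l] + [Φ^k, Φ^{l+2}]. -/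
/-! Right bracketing with an odd element `x` is an odd derivation `D`:
`D[a, b] = (-1)^|b| [D a, b] + [a, D b]`. Applying it twice, the two cross terms
`[D a, D b]` carry opposite signs and cancel, so `D²` is an even derivation. Since
`Φ^{k+2} = D² Φ^k` for `D = [·, ξ]`, the lemma is the Leibniz rule for `D²`. -/

section OddDerivation

variable {R L : Type*} [CommRing R] [AddCommGroup L] [Module R L]
  {G : ZMod 2 → Submodule R L} {bracket : L →ₗ[R] L →ₗ[R] L}

theorem leibniz_bracket_odd
    (hgrade : ∀ (p q : ZMod 2) (a b : L), a ∈ G p → b ∈ G q → bracket a b ∈ G (p + q))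
    (hskew : ∀ (p q : ZMod 2) (a b : L), a ∈ G p → b ∈ G q →
      bracket a b = -((-1 : ℤ) ^ (p.val * q.val) • bracket b a))
    (hjacobi : ∀ (p q : ZMod 2) (a b c : L), a ∈ G p → b ∈ G q →
      bracket a (bracket b c) =
        bracket (bracket a b) c + (-1 : ℤ) ^ (p.val * q.val) • bracket b (bracket a c))
    {x a b : L} {p q : ZMod 2} (hx : x ∈ G 1) (ha : a ∈ G p) (hb : b ∈ G q) :
    bracket (bracket a b) x =
      ((-1 : ℤ) ^ q.val) • bracket (bracket a x) b + bracket a (bracket b x) := by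
  have hsign : ∀ p q : ZMod 2,
      -((-1 : ℤ) ^ (p.val * q.val) * (-1) ^ (q.val * (p + 1).val)) = -(-1) ^ q.val := by
    decide
  rw [hjacobi p q a b x ha hb, hskew q (p + 1) b (bracket a x) hb (hgrade p 1 a x ha hx),
    smul_neg, smul_smul, ← neg_smul, hsign]
  module

theorem leibniz_bracket_odd_twice
    (hgrade : ∀ (p q : ZMod 2) (a b : L), a ∈ G p → b ∈ G q → bracket a b ∈ G (p + q))
    (hskew : ∀ (p q : ZMod 2) (a b : L), a ∈ G p → b ∈ G q →
      bracket a b = -((-1 : ℤ) ^ (p.val * q.val) • bracket b a))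
    (hjacobi : ∀ (p q : ZMod 2) (a b c : L), a ∈ G p → b ∈ G q →
      bracket a (bracket b c) =
        bracket (bracket a b) c + (-1 : ℤ) ^ (p.val * q.val) • bracket b (bracket a c))
    {x a b : L} {p q : ZMod 2} (hx : x ∈ G 1) (ha : a ∈ G p) (hb : b ∈ G q) :
    bracket (bracket (bracket a b) x) x =
      bracket (bracket (bracket a x) x) b + bracket a (bracket (bracket b x) x) := by
  have hD := fun {p q : ZMod 2} {a b : L} (ha : a ∈ G p) (hb : b ∈ G q) =>
    leibniz_bracket_odd hgrade hskew hjacobi hx ha hb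
  have hsign : ∀ r : ZMod 2, (-1 : ℤ) ^ (r + 1).val = -(-1) ^ r.val := by decide
  rw [hD ha hb, map_add, map_zsmul, LinearMap.add_apply, LinearMap.smul_apply,
    hD (hgrade p 1 a x ha hx) hb, hD ha (hgrade q 1 b x hb hx), hsign]
  rcases neg_one_pow_eq_or ℤ q.val with h | h <;> rw [h] <;> module

end OddDerivation

/-- Lemma 4.2 of the paper: for odd `ξ, θ` and `Φ⁰ = θ`, `Φ^{k+1} = [Φ^k, ξ]`,
one has `[[[Φ^k, Φ^l], ξ], ξ] = [Φ^{k+2}, Φ^l] + [Φ^k, Φ^{l+2}]`. -/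
theorem double_ad_on_Phi_bracket {R L : Type*} [CommRing R] [AddCommGroup L] [Module R L]
    (G : ZMod 2 → Submodule R L)
    (bracket : L →ₗ[R] L →ₗ[R] L)
    (hgrade : ∀ (p q : ZMod 2) (a b : L), a ∈ G p → b ∈ G q → bracket a b ∈ G (p + q))
    (hskew : ∀ (p q : ZMod 2) (a b : L), a ∈ G p → b ∈ G q →
      bracket a b = -((-1 : ℤ) ^ (p.val * q.val) • bracket b a))
    (hjacobi : ∀ (p q : ZMod 2) (a b c : L), a ∈ G p → b ∈ G q →
      bracket a (bracket b c) =
        bracket (bracket a b) c + (-1 : ℤ) ^ (p.val * q.val) • bracket b (bracket a c))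
    (ξ θ : L) (hξ : ξ ∈ G 1) (hθ : θ ∈ G 1)
    (Φ : ℕ → L) (hΦ0 : Φ 0 = θ) (hΦ : ∀ k, Φ (k + 1) = bracket (Φ k) ξ)
    (k l : ℕ) :
    bracket (bracket (bracket (Φ k) (Φ l)) ξ) ξ =
      bracket (Φ (k + 2)) (Φ l) + bracket (Φ k) (Φ (l + 2)) := by
  have hΦ_mem : ∀ n : ℕ, Φ n ∈ G ((n : ZMod 2) + 1) := by
    intro n
    induction n with
    | zero => simpa [hΦ0] using hθ
    | succ n ih =>
      rw [hΦ n, Nat.cast_succ]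
      exact hgrade _ 1 _ _ ih hξ
  have hΦ_two : ∀ n, Φ (n + 2) = bracket (bracket (Φ n) ξ) ξ := fun n => by rw [hΦ, hΦ]
  rw [hΦ_two, hΦ_two]
  exact leibniz_bracket_odd_twice hgrade hskew hjacobi hξ (hΦ_mem k) (hΦ_mem l)
end

section
/- Let L be a Lie superalgebra and D an odd derivation of L with D² = 0. Define the derived bracket [a,b]_D := (−1)^{|a|}[Da, b] for homogeneous a, b. Then the derived bracket satisfies the graded Leibniz (Loday) identity: [a,[b,c]_D]_D = [[a,b]_D, c]_D + (−1)^{(|a|+1)(|b|+1)} [b,[a,c]_D]_D for all homogeneous a, b, c ∈ L. -/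
/-- The derived bracket `[a, x]_D = (-1)^{|a|} [D a, x]` of an element `a` of
parity `p` with an arbitrary element `x`. -/
def derivedBracket {R L : Type*} [CommRing R] [AddCommGroup L] [Module R L]
    (bracket : L →ₗ[R] L →ₗ[R] L) (D : L →ₗ[R] L) (p : ZMod 2) (a x : L) : L :=
  (-1 : ℤ) ^ p.val • bracket (D a) x

/-!
Unfolding both derived brackets, every term of the identity is a sign times a bracket of
`D a`, `D b` and `c`. The only nontrivial unfolding is `D [D a, b] = ± [D a, D b]`, which is where
`D² = 0` enters. The identity then becomes the Jacobi identity for the elements `D a` and `D b`,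
of parities `|a| + 1` and `|b| + 1`, and what remains is a comparison of signs.
-/

theorem ZMod.neg_one_pow_val_add (p q : ZMod 2) :
    (-1 : ℤ) ^ (p + q).val = (-1) ^ p.val * (-1) ^ q.val := by
  fin_cases p <;> fin_cases q <;> rfl

section DerivedBracket

variable {R L : Type*} [CommRing R] [AddCommGroup L] [Module R L]
  {G : ZMod 2 → Submodule R L} {bracket : L →ₗ[R] L →ₗ[R] L} {D : L →ₗ[R] L}

theorem derivedBracket_derivedBracket (p q : ZMod 2) (a b c : L) :
    derivedBracket bracket D p a (derivedBracket bracket D q b c) =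
      (-1 : ℤ) ^ (p + q).val • bracket (D a) (bracket (D b) c) := by
  simp only [derivedBracket, map_zsmul, smul_smul, ZMod.neg_one_pow_val_add]

theorem apply_bracket_apply_of_sq_eq_zero
    (hder : ∀ (p : ZMod 2) (a b : L), a ∈ G p →
      D (bracket a b) = bracket (D a) b + (-1 : ℤ) ^ p.val • bracket a (D b))
    (hD2 : ∀ x : L, D (D x) = 0) {p : ZMod 2} {a : L} (ha : D a ∈ G p) (b : L) :
    D (bracket (D a) b) = (-1 : ℤ) ^ p.val • bracket (D a) (D b) := by
  rw [hder p _ b ha, hD2, map_zero, LinearMap.zero_apply, zero_add]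

theorem derivedBracket_derivedBracket_left
    (hDodd : ∀ (p : ZMod 2) (a : L), a ∈ G p → D a ∈ G (p + 1))
    (hder : ∀ (p : ZMod 2) (a b : L), a ∈ G p →
      D (bracket a b) = bracket (D a) b + (-1 : ℤ) ^ p.val • bracket a (D b))
    (hD2 : ∀ x : L, D (D x) = 0) {p : ZMod 2} {a : L} (ha : a ∈ G p) (q : ZMod 2) (b c : L) :
    derivedBracket bracket D (p + q + 1) (derivedBracket bracket D p a b) c =
      (-1 : ℤ) ^ (p + q).val • bracket (bracket (D a) (D b)) c := by
  have hsign : (-1 : ℤ) ^ (p + q + 1).val * ((-1) ^ p.val * (-1) ^ (p + 1).val) =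
      (-1) ^ (p + q).val := by
    fin_cases p <;> fin_cases q <;> rfl
  simp only [derivedBracket, map_zsmul, apply_bracket_apply_of_sq_eq_zero hder hD2 (hDodd p a ha),
    LinearMap.smul_apply, smul_smul, hsign]

end DerivedBracket

theorem derivedBracket_loday_general {R L : Type*} [CommRing R] [AddCommGroup L] [Module R L]
    (G : ZMod 2 → Submodule R L)
    (bracket : L →ₗ[R] L →ₗ[R] L)
    (hjacobi : ∀ (p q : ZMod 2) (a b c : L), a ∈ G p → b ∈ G q →
      bracket a (bracket b c) =
        bracket (bracket a b) c + (-1 : ℤ) ^ (p.val * q.val) • bracket b (bracket a c))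
    (D : L →ₗ[R] L)
    (hDodd : ∀ (p : ZMod 2) (a : L), a ∈ G p → D a ∈ G (p + 1))
    (hder : ∀ (p : ZMod 2) (a b : L), a ∈ G p →
      D (bracket a b) = bracket (D a) b + (-1 : ℤ) ^ p.val • bracket a (D b))
    (hD2 : ∀ x : L, D (D x) = 0)
    (p q : ZMod 2) (a b c : L) (ha : a ∈ G p) (hb : b ∈ G q) :
    derivedBracket bracket D p a (derivedBracket bracket D q b c) =
      derivedBracket bracket D (p + q + 1) (derivedBracket bracket D p a b) c +
        (-1 : ℤ) ^ ((p.val + 1) * (q.val + 1)) •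
          derivedBracket bracket D q b (derivedBracket bracket D p a c) := by
  have hsign : (-1 : ℤ) ^ (p + q).val * (-1) ^ ((p + 1).val * (q + 1).val) =
      (-1) ^ ((p.val + 1) * (q.val + 1)) * (-1) ^ (q + p).val := by
    fin_cases p <;> fin_cases q <;> rfl
  rw [derivedBracket_derivedBracket, derivedBracket_derivedBracket,
    derivedBracket_derivedBracket_left hDodd hder hD2 ha,
    hjacobi (p + 1) (q + 1) (D a) (D b) c (hDodd p a ha) (hDodd q b hb),
    smul_add, smul_smul, smul_smul, hsign]

/-- If `D` is an odd derivation of a Lie superalgebra with `D² = 0`, the derived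
bracket satisfies the graded Leibniz (Loday) identity. -/
theorem derivedBracket_loday {R L : Type*} [CommRing R] [AddCommGroup L] [Module R L]
    (G : ZMod 2 → Submodule R L)
    (bracket : L →ₗ[R] L →ₗ[R] L)
    (hgrade : ∀ (p q : ZMod 2) (a b : L), a ∈ G p → b ∈ G q → bracket a b ∈ G (p + q))
    (hskew : ∀ (p q : ZMod 2) (a b : L), a ∈ G p → b ∈ G q →
      bracket a b = -((-1 : ℤ) ^ (p.val * q.val) • bracket b a))
    (hjacobi : ∀ (p q : ZMod 2) (a b c : L), a ∈ G p → b ∈ G q →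
      bracket a (bracket b c) =
        bracket (bracket a b) c + (-1 : ℤ) ^ (p.val * q.val) • bracket b (bracket a c))
    (D : L →ₗ[R] L)
    (hDodd : ∀ (p : ZMod 2) (a : L), a ∈ G p → D a ∈ G (p + 1))
    (hder : ∀ (p : ZMod 2) (a b : L), a ∈ G p →
      D (bracket a b) = bracket (D a) b + (-1 : ℤ) ^ p.val • bracket a (D b))
    (hD2 : ∀ x : L, D (D x) = 0)
    (p q r : ZMod 2) (a b c : L) (ha : a ∈ G p) (hb : b ∈ G q) (hc : c ∈ G r) :
    derivedBracket bracket D p a (derivedBracket bracket D q b c) =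
      derivedBracket bracket D (p + q + 1) (derivedBracket bracket D p a b) c +
        (-1 : ℤ) ^ ((p.val + 1) * (q.val + 1)) •
          derivedBracket bracket D q b (derivedBracket bracket D p a c) :=
  derivedBracket_loday_general G bracket hjacobi D hDodd hder hD2 p q a b c ha hb
end

section
/- Let A = ⊕_{k≥0} A^k be a nonnegatively graded Lie algebra whose bracket has weight −2 (i.e. [A^i, A^j] ⊆ A^{i+j−2}, with A^n := 0 for n < 0), and let P : A → A be the projection onto A⁰ ⊕ A¹. Then for all f, g ∈ A: P[f,g] + [Pf, Pg] = P[Pf, g] + P[f, Pg]. -/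
/-!
Both sides are bilinear in `(f, g)`, so it suffices to compare them on homogeneous elements
`f ∈ A^i`, `g ∈ A^j`. There `P` acts as the identity or as zero, and `[f, g]` has weight
`i + j - 2`, which is at most `1` exactly when `i + j ≤ 3`; the four cases `i, j ≤ 1` or `≥ 2`
are then immediate.
-/

theorem LinearMap.eq_zero_of_iSup_eq_top₂ {R M N Q : Type*} [CommRing R]
    [AddCommGroup M] [AddCommGroup N] [AddCommGroup Q] [Module R M] [Module R N] [Module R Q]
    {ι κ : Type*} {G : ι → Submodule R M} {H : κ → Submodule R N}
    (hG : iSup G = ⊤) (hH : iSup H = ⊤) (B : M →ₗ[R] N →ₗ[R] Q)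
    (hB : ∀ i j, ∀ x ∈ G i, ∀ y ∈ H j, B x y = 0) : B = 0 := by
  rw [← LinearMap.ker_eq_top, eq_top_iff, ← hG]
  refine iSup_le fun i x hx => ?_
  rw [LinearMap.mem_ker, ← LinearMap.ker_eq_top, eq_top_iff, ← hH]
  exact iSup_le fun j y hy => hB i j x hx y hy

section GradedBracket

variable {R M : Type*} [CommRing R] [AddCommGroup M] [Module R M]
  {G : ℕ → Submodule R M} {bracket : M →ₗ[R] M →ₗ[R] M}
  (hweight : ∀ (i j : ℕ) (x y : M), x ∈ G i → y ∈ G j →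
    if 2 ≤ i + j then bracket x y ∈ G (i + j - 2) else bracket x y = 0)
  {P : M →ₗ[R] M} (hP : ∀ (k : ℕ) (x : M), x ∈ G k → P x = if k ≤ 1 then x else 0)
include hweight hP

theorem projector_bracket_of_mem {i j : ℕ} {x y : M} (hx : x ∈ G i) (hy : y ∈ G j) :
    P (bracket x y) = if i + j ≤ 3 then bracket x y else 0 := by
  have hxy := hweight i j x y hx hy
  by_cases h2 : 2 ≤ i + j
  · rw [if_pos h2] at hxy
    rw [hP _ _ hxy]
    exact if_congr (by omega) rfl rfl
  · rw [if_neg h2] at hxy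
    simp [hxy]

theorem projector_distributivity_of_mem {i j : ℕ} {x y : M} (hx : x ∈ G i) (hy : y ∈ G j) :
    P (bracket x y) + bracket (P x) (P y) = P (bracket (P x) y) + P (bracket x (P y)) := by
  have hPxy := projector_bracket_of_mem hweight hP hx hy
  rw [hP i x hx, hP j y hy]
  by_cases hi : i ≤ 1 <;> by_cases hj : j ≤ 1
  · simp only [if_pos hi, if_pos hj, hPxy, if_pos (show i + j ≤ 3 by omega)]
  · simp [hi, hj]
  · simp [hi, hj]
  · simp [hi, hj, hPxy, show ¬ i + j ≤ 3 by omega]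

end GradedBracket

theorem projector_distributivity_general {R M : Type*} [CommRing R] [AddCommGroup M]
    [Module R M]
    (G : ℕ → Submodule R M) (hG : DirectSum.IsInternal G)
    (bracket : M →ₗ[R] M →ₗ[R] M)
    (hweight : ∀ (i j : ℕ) (x y : M), x ∈ G i → y ∈ G j →
      if 2 ≤ i + j then bracket x y ∈ G (i + j - 2) else bracket x y = 0)
    (P : M →ₗ[R] M)
    (hP : ∀ (k : ℕ) (x : M), x ∈ G k → P x = if k ≤ 1 then x else 0)
    (f g : M) :
    P (bracket f g) + bracket (P f) (P g) =
      P (bracket (P f) g) + P (bracket f (P g)) := by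
  set defect : M →ₗ[R] M →ₗ[R] M :=
    bracket.compr₂ P + bracket.compl₁₂ P P - (bracket ∘ₗ P).compr₂ P - (bracket.compl₂ P).compr₂ P
    with hdefect
  have hzero : defect = 0 :=
    LinearMap.eq_zero_of_iSup_eq_top₂ hG.submodule_iSup_eq_top hG.submodule_iSup_eq_top defect
      fun i j x hx y hy => by
        simp only [hdefect, LinearMap.sub_apply, LinearMap.add_apply, LinearMap.compr₂_apply,
          LinearMap.compl₁₂_apply, LinearMap.comp_apply, LinearMap.compl₂_apply]
        rw [projector_distributivity_of_mem hweight hP hx hy, sub_sub, sub_self]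
  have hfg := LinearMap.congr_fun₂ hzero f g
  simp only [hdefect, LinearMap.sub_apply, LinearMap.add_apply, LinearMap.compr₂_apply,
    LinearMap.compl₁₂_apply, LinearMap.comp_apply, LinearMap.compl₂_apply,
    LinearMap.zero_apply, sub_sub] at hfg
  exact sub_eq_zero.mp hfg

/-- For a nonnegatively graded Lie algebra whose bracket has weight `-2`, the
projection `P` onto the weight `0` and weight `1` components satisfies the
distributivity law `P[f,g] + [Pf,Pg] = P[Pf,g] + P[f,Pg]`. -/
theorem projector_distributivity {R M : Type*} [CommRing R] [AddCommGroup M]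
    [Module R M]
    (G : ℕ → Submodule R M) (hG : DirectSum.IsInternal G)
    (bracket : M →ₗ[R] M →ₗ[R] M)
    (hweight : ∀ (i j : ℕ) (x y : M), x ∈ G i → y ∈ G j →
      if 2 ≤ i + j then bracket x y ∈ G (i + j - 2) else bracket x y = 0)
    (hskew : ∀ x : M, bracket x x = 0)
    (hjacobi : ∀ x y z : M, bracket x (bracket y z) =
      bracket (bracket x y) z + bracket y (bracket x z))
    (P : M →ₗ[R] M)
    (hP : ∀ (k : ℕ) (x : M), x ∈ G k → P x = if k ≤ 1 then x else 0)
    (f g : M) :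
    P (bracket f g) + bracket (P f) (P g) =
      P (bracket (P f) g) + P (bracket f (P g)) :=
  projector_distributivity_general G hG bracket hweight P hP f g
end

section
/- Let L be a Lie superalgebra, Q an odd derivation of L, and P : L → L a linear projector (P² = P, preserving parity) satisfying PQP = PQ and the distributivity law P[f,g] + [Pf,Pg] = P[Pf,g] + P[f,Pg] for all f,g. Then for all odd a, b ∈ L: PQ(P[Qa,b] − [PQa,b]) + (P[QPQa,b] − [PQPQa,b]) − (P[Qa,PQb] − [PQa,PQb]) = P[Q²a,b] − [PQ²a,b]. In particular, if Q² = 0 then the binary derived Dorfman bracket d₂(a,b) := P[Qa,b] − [PQa,b] satisfies the Leibniz rule with respect to the differential d₁ := PQ on odd elements a, b, in the form d₁ d₂(a,b) + d₂(d₁a, b) − d₂(a, d₁b) = 0. -/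
/-- The second-order homotopy Loday identity for the higher derived Dorfman
brackets, evaluated on odd elements `a, b` of a Lie superalgebra `L`:
with `Q` an odd derivation and `P` a parity-preserving projector satisfying
`PQP = PQ` and the distributivity law, one has
`PQ(P[Qa,b] − [PQa,b]) + (P[QPQa,b] − [PQPQa,b]) − (P[Qa,PQb] − [PQa,PQb])
  = P[Q²a,b] − [PQ²a,b]`. -/
theorem second_loday_identity {R L : Type*} [CommRing R] [AddCommGroup L] [Module R L]
    (G : ZMod 2 → Submodule R L)
    (bracket : L →ₗ[R] L →ₗ[R] L)
    (hgrade : ∀ (p q : ZMod 2) (a b : L), a ∈ G p → b ∈ G q → bracket a b ∈ G (p + q))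
    (hskew : ∀ (p q : ZMod 2) (a b : L), a ∈ G p → b ∈ G q →
      bracket a b = -((-1 : ℤ) ^ (p.val * q.val) • bracket b a))
    (hjacobi : ∀ (p q : ZMod 2) (a b c : L), a ∈ G p → b ∈ G q →
      bracket a (bracket b c) =
        bracket (bracket a b) c + (-1 : ℤ) ^ (p.val * q.val) • bracket b (bracket a c))
    (Q : L →ₗ[R] L)
    (hQodd : ∀ (p : ZMod 2) (a : L), a ∈ G p → Q a ∈ G (p + 1))
    (hQder : ∀ (p : ZMod 2) (a b : L), a ∈ G p →
      Q (bracket a b) = bracket (Q a) b + (-1 : ℤ) ^ p.val • bracket a (Q b))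
    (P : L →ₗ[R] L)
    (hPproj : ∀ x : L, P (P x) = P x)
    (hPparity : ∀ (p : ZMod 2) (x : L), x ∈ G p → P x ∈ G p)
    (hPQP : ∀ x : L, P (Q (P x)) = P (Q x))
    (hPdistrib : ∀ f g : L,
      P (bracket f g) + bracket (P f) (P g) =
        P (bracket (P f) g) + P (bracket f (P g)))
    (a b : L) (ha : a ∈ G 1) (hb : b ∈ G 1) :
    P (Q (P (bracket (Q a) b) - bracket (P (Q a)) b)) +
        (P (bracket (Q (P (Q a))) b) - bracket (P (Q (P (Q a)))) b) -
        (P (bracket (Q a) (P (Q b))) - bracket (P (Q a)) (P (Q b))) =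
      P (bracket (Q (Q a)) b) - bracket (P (Q (Q a))) b := by
  have h01 : (1 + 1 : ZMod 2) = 0 := by decide
  have e0 : Q a ∈ G 0 := by have := hQodd 1 a ha; rwa [h01] at this
  have ePQa : P (Q a) ∈ G 0 := hPparity 0 _ e0
  have h1 : Q (bracket (Q a) b) = bracket (Q (Q a)) b + bracket (Q a) (Q b) := by
    have h := hQder 0 (Q a) b e0
    simpa using h
  have h2 : Q (bracket (P (Q a)) b)
      = bracket (Q (P (Q a))) b + bracket (P (Q a)) (Q b) := by
    have h := hQder 0 (P (Q a)) b ePQa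
    simpa using h
  have h3 := hPdistrib (Q a) (Q b)
  have h4 : P (Q (P (Q a))) = P (Q (Q a)) := hPQP (Q a)
  have h5 : P (Q (P (bracket (Q a) b))) = P (Q (bracket (Q a) b)) := hPQP _
  rw [map_sub, map_sub, h5, h1, h2, h4, map_add, map_add]
  rw [← sub_eq_zero]
  have h3' : P (bracket (Q a) (Q b)) + bracket (P (Q a)) (P (Q b))
      - (P (bracket (P (Q a)) (Q b)) + P (bracket (Q a) (P (Q b)))) = 0 :=
    sub_eq_zero.mpr h3
  calc P (bracket (Q (Q a)) b) + P (bracket (Q a) (Q b)) -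
        (P (bracket (Q (P (Q a))) b) + P (bracket (P (Q a)) (Q b))) +
        (P (bracket (Q (P (Q a))) b) - bracket (P (Q (Q a))) b) -
        (P (bracket (Q a) (P (Q b))) - bracket (P (Q a)) (P (Q b))) -
        (P (bracket (Q (Q a)) b) - bracket (P (Q (Q a))) b)
      = P (bracket (Q a) (Q b)) + bracket (P (Q a)) (P (Q b))
          - (P (bracket (P (Q a)) (Q b)) + P (bracket (Q a) (P (Q b)))) := by
        abel
    _ = 0 := h3'
end
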